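/- Let $R$ be a commutative local ring, let $I, J$ be ideals of $R$, and suppose the product ideal $IJ$ is principal, generated by a nonzerodivisor $f$. Then both $I$ and $J$ are principal ideals. -/

import Mathlib

open scoped Pointwise

theorem factors_of_principal_product {R : Type*} [CommRing R] [IsLocalRing R]
    (I J : Ideal R) (f : R) (hf : f ∈ nonZeroDivisors R)
    (h : I * J = Ideal.span {f}) :
    (∃ g : R, I = Ideal.span {g}) ∧ (∃ g : R, J = Ideal.span {g}) := by
  classical
  have hfIJ : f ∈ I * J := h ▸ Ideal.mem_span_singleton_self f
  rw [Submodule.mul_eq_span_mul_set] at hfIJ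
  obtain ⟨c, hsupp, hsum⟩ := Submodule.mem_span_set.mp hfIJ
  have hterm : ∀ x ∈ c.support, ∃ d : R, c x • x = d * f := by
    intro x hx
    have hx' : x ∈ (I : Set R) * (J : Set R) := hsupp hx
    obtain ⟨a, ha, b, hb, hab⟩ := Set.mem_mul.mp hx'
    have : c x • x ∈ I * J := by
      rw [← hab]
      exact Ideal.mul_mem_left _ _ (Ideal.mul_mem_mul ha hb)
    rw [h, Ideal.mem_span_singleton'] at this
    obtain ⟨e, he⟩ := this
    exact ⟨e, he.symm⟩
  choose d hd using hterm
  have hsum1 : (∑ x ∈ c.support.attach, d x.1 x.2) = 1 := by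
    have h1 : (∑ x ∈ c.support.attach, d x.1 x.2) * f = f := by
      calc (∑ x ∈ c.support.attach, d x.1 x.2) * f
          = ∑ x ∈ c.support.attach, d x.1 x.2 * f := Finset.sum_mul ..
        _ = ∑ x ∈ c.support.attach, c x.1 • x.1 := by
            refine Finset.sum_congr rfl fun x _ => (hd x.1 x.2).symm
        _ = ∑ x ∈ c.support, c x • x := Finset.sum_attach _ (fun x => c x • x)
        _ = f := hsum
    have h2 : ((∑ x ∈ c.support.attach, d x.1 x.2) - 1) * f = 0 := by
      rw [sub_mul, h1, one_mul, sub_self]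
    have := hf.2 _ h2
    linear_combination this
  have hx : ∃ y : c.support, IsUnit (d y.1 y.2) := by
    by_contra hcon
    push_neg at hcon
    have : (1 : R) ∈ IsLocalRing.maximalIdeal R := by
      rw [← hsum1]
      exact Ideal.sum_mem _ fun y _ =>
        (IsLocalRing.mem_maximalIdeal _).mpr (hcon y)
    exact (IsLocalRing.maximalIdeal.isMaximal R).ne_top
      (Ideal.eq_top_of_isUnit_mem _ this isUnit_one)
  obtain ⟨y, hu⟩ := hx
  obtain ⟨a, ha, b, hb, hab⟩ := Set.mem_mul.mp (hsupp y.2)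
  obtain ⟨u, hu'⟩ := hu
  have hfab : f = ((u⁻¹ : Rˣ) : R) * c y.1 * (a * b) := by
    have h1 : c y.1 • y.1 = (u : R) * f := by rw [hu']; exact hd y.1 y.2
    have h2 : c y.1 * (a * b) = (u : R) * f := by
      rw [hab]; simpa [smul_eq_mul] using h1
    calc f = ((u⁻¹ : Rˣ) : R) * ((u : R) * f) := by rw [← mul_assoc]; simp
      _ = ((u⁻¹ : Rˣ) : R) * (c y.1 * (a * b)) := by rw [h2]
      _ = _ := by ring
  set r : R := ((u⁻¹ : Rˣ) : R) * c y.1 with hr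
  have hbnzd : ∀ z : R, b * z = 0 → z = 0 := by
    intro z hz
    have hz' : z * f = 0 := by
      calc z * f = r * a * (b * z) := by rw [hfab]; ring
        _ = 0 := by rw [hz]; ring
    exact hf.2 z hz'
  have hanzd : ∀ z : R, a * z = 0 → z = 0 := by
    intro z hz
    have hz' : z * f = 0 := by
      calc z * f = r * b * (a * z) := by rw [hfab]; ring
        _ = 0 := by rw [hz]; ring
    exact hf.2 z hz'
  constructor
  · refine ⟨a, le_antisymm ?_ ?_⟩
    · intro w hw
      have : w * b ∈ Ideal.span {f} := h ▸ Ideal.mul_mem_mul hw hb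
      rw [Ideal.mem_span_singleton'] at this
      obtain ⟨t, ht⟩ := this
      rw [Ideal.mem_span_singleton']
      refine ⟨t * r, ?_⟩
      have hz : b * (t * r * a - w) = 0 := by
        rw [hfab] at ht
        linear_combination ht
      have := hbnzd _ hz
      linear_combination this
    · rw [Ideal.span_le, Set.singleton_subset_iff]; exact ha
  · refine ⟨b, le_antisymm ?_ ?_⟩
    · intro w hw
      have : w * a ∈ Ideal.span {f} := by
        rw [← h, mul_comm I J]; exact Ideal.mul_mem_mul hw ha
      rw [Ideal.mem_span_singleton'] at this
      obtain ⟨t, ht⟩ := this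
      rw [Ideal.mem_span_singleton']
      refine ⟨t * r, ?_⟩
      have hz : a * (t * r * b - w) = 0 := by
        rw [hfab] at ht
        linear_combination ht
      have := hanzd _ hz
      linear_combination this
    · rw [Ideal.span_le, Set.singleton_subset_iff]; exact hb
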